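/- Koopman Control Factorization: Let ψ_x : ℝ^n → ℝ^{d}, ψ_u : ℝ^n → ℝ^{p}, and suppose there exist matrices S ∈ ℝ^{s×d} and H ∈ ℝ^{(s·p)×d} such that (S ψ_x(x)) ⊗ ψ_u(x) = H ψ_x(x) for all x. Suppose the plant satisfies the bilinear Koopman model ψ_x(x⁺) = K_{xx} ψ_x(x) + K_{xu}((S ψ_x(x)) ⊗ u) for all x and inputs u, with K_{xu} ∈ ℝ^{d×(s·m)}. Then under the feedback law u = K_u ψ_u(x) with K_u ∈ ℝ^{m×p}, the closed-loop system satisfies ψ_x(x⁺) = K̃ ψ_x(x) with K̃ = K_{xx} + K_{xu}(I_s ⊗ K_u) H. -/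
import Mathlib


open Matrix Kronecker

/-- Kronecker product of vectors, indexed by the product type. -/
def vecKron {m n : Type*} (a : m → ℝ) (b : n → ℝ) : m × n → ℝ :=
  fun p => a p.1 * b p.2

lemma vecKron_mulVec {s m q : ℕ} (a : Fin s → ℝ) (Ku : Matrix (Fin m) (Fin q) ℝ)
    (b : Fin q → ℝ) :
    vecKron a (Ku.mulVec b) =
      (((1 : Matrix (Fin s) (Fin s) ℝ) ⊗ₖ Ku)).mulVec (vecKron a b) := by
  funext ⟨i, j⟩
  simp only [vecKron, mulVec, dotProduct, kroneckerMap_apply, Fintype.sum_prod_type,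
    Matrix.one_apply]
  rw [Finset.sum_eq_single i]
  · simp only [if_pos rfl, one_mul, Finset.mul_sum]
    exact Finset.sum_congr rfl fun k _ => by simp [mul_comm, mul_assoc, mul_left_comm]
  · intro k _ hk
    simp [hk.symm]
  · simp

/-- Koopman Control Factorization. -/
theorem koopman_control_factorization {n d p s m : ℕ}
    (ψx : (Fin n → ℝ) → Fin d → ℝ) (ψu : (Fin n → ℝ) → Fin p → ℝ)
    (S : Matrix (Fin s) (Fin d) ℝ) (H : Matrix (Fin s × Fin p) (Fin d) ℝ)
    (Kxx : Matrix (Fin d) (Fin d) ℝ) (Kxu : Matrix (Fin d) (Fin s × Fin m) ℝ)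
    (Ku : Matrix (Fin m) (Fin p) ℝ)
    (F : (Fin n → ℝ) → (Fin m → ℝ) → (Fin n → ℝ))
    (hH : ∀ x, vecKron (S.mulVec (ψx x)) (ψu x) = H.mulVec (ψx x))
    (hK : ∀ x u, ψx (F x u) =
      Kxx.mulVec (ψx x) + Kxu.mulVec (vecKron (S.mulVec (ψx x)) u)) :
    ∀ x, ψx (F x (Ku.mulVec (ψu x))) =
      (Kxx + Kxu * ((1 : Matrix (Fin s) (Fin s) ℝ) ⊗ₖ Ku) * H).mulVec (ψx x) := by
  intro x
  rw [hK, vecKron_mulVec, hH]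
  simp [← mulVec_mulVec, Matrix.mul_assoc, add_mulVec]
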